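/- Let Φ : M_r → M_n be a linear map and let 1 ≤ k ≤ n. Then sup{ |⟨v, (id_k ⊗ Φ)(X) v⟩| : X ∈ M_k ⊗ M_r Hermitian with ‖X‖ ≤ 1, v a unit vector in ℂ^k ⊗ ℂ^n } equals sup over all m ≥ 1 of sup{ |⟨v, (id_m ⊗ Φ)(X) v⟩| : X ∈ M_m ⊗ M_r Hermitian with ‖X‖ ≤ 1, v a unit vector in ℂ^m ⊗ ℂ^n with SR(v) ≤ k }. (This is Equation (10) of the paper, the stabilization result for the completely bounded order norm on the k-super minimal operator system.) -/

import Mathlib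

open scoped ComplexOrder Kronecker
open Matrix

noncomputable section

/-- The standard inner product `⟨v, w⟩ = ∑ conj(vᵢ) wᵢ` on `I → ℂ`. -/
def inprod {I : Type*} [Fintype I] (v w : I → ℂ) : ℂ :=
  ∑ i, (starRingEnd ℂ) (v i) * w i

/-- `v` is a unit vector. -/
def UnitVec {I : Type*} [Fintype I] (v : I → ℂ) : Prop :=
  inprod v v = 1

/-- The Schmidt rank of a vector in `ℂ^I ⊗ ℂ^J`, i.e. the rank of the associated
`I × J` coefficient matrix. -/
noncomputable def SchmidtRank {I J : Type*} [Fintype I] [Fintype J] (v : I × J → ℂ) : ℕ :=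
  (Matrix.of fun i j => v (i, j)).rank

/-- The operator norm (largest singular value) of a matrix, as
`sup { |⟨v, A w⟩| : v, w unit vectors }`. -/
noncomputable def opNorm {I J : Type*} [Fintype I] [Fintype J] (A : Matrix I J ℂ) : ℝ :=
  sSup { t : ℝ | ∃ v w, UnitVec v ∧ UnitVec w ∧ t = ‖inprod v (A.mulVec w)‖ }

/-- The `S(k)`-norm of `X ∈ M_I ⊗ M_J`. -/
noncomputable def SNorm {I J : Type*} [Fintype I] [Fintype J] (k : ℕ)
    (X : Matrix (I × J) (I × J) ℂ) : ℝ :=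
  sSup { t : ℝ | ∃ v w : I × J → ℂ, UnitVec v ∧ UnitVec w ∧
    SchmidtRank v ≤ k ∧ SchmidtRank w ≤ k ∧
    t = ‖inprod v (X.mulVec w)‖ }

/-- `X` is a `k`-block positive (Hermitian) operator: `⟨v, X v⟩ ≥ 0` for every
vector of Schmidt rank at most `k`. -/
def kBlockPos {I J : Type*} [Fintype I] [Fintype J] (k : ℕ)
    (X : Matrix (I × J) (I × J) ℂ) : Prop :=
  X.IsHermitian ∧ ∀ v : I × J → ℂ, SchmidtRank v ≤ k → 0 ≤ inprod v (X.mulVec v)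

/-- `ρ` has Schmidt number at most `k` (in particular it is positive semidefinite):
it is a finite nonnegative combination of rank-one projections onto vectors of
Schmidt rank at most `k`. -/
def SchmidtNumberLE {I J : Type*} [Fintype I] [Fintype J] (k : ℕ)
    (ρ : Matrix (I × J) (I × J) ℂ) : Prop :=
  ∃ (N : ℕ) (c : Fin N → ℝ) (v : Fin N → (I × J → ℂ)),
    (∀ i, 0 ≤ c i) ∧ (∀ i, SchmidtRank (v i) ≤ k) ∧
    ρ = ∑ i, (c i : ℂ) • Matrix.vecMulVec (v i) (star (v i))

/-- `id_I ⊗ Φ` : the map applying `Φ` to the second tensor factor. -/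
noncomputable def tensorId {I : Type*} [Fintype I] {a b : ℕ}
    (Φ : Matrix (Fin a) (Fin a) ℂ →ₗ[ℂ] Matrix (Fin b) (Fin b) ℂ)
    (X : Matrix (I × Fin a) (I × Fin a) ℂ) : Matrix (I × Fin b) (I × Fin b) ℂ :=
  Matrix.of fun p q => Φ (Matrix.of fun s t => X (p.1, s) (q.1, t)) p.2 q.2

/-- The trace norm `‖X‖_tr = Tr √(X^* X)`. -/
noncomputable def trNorm {I : Type*} [Fintype I] [DecidableEq I] (X : Matrix I I ℂ) : ℝ :=
  ((Matrix.posSemidef_conjTranspose_mul_self X).1.eigenvectorUnitary.1 *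
    Matrix.diagonal (((↑) : ℝ → ℂ) ∘ (Real.sqrt ·) ∘ (Matrix.posSemidef_conjTranspose_mul_self X).1.eigenvalues) *
    (star (Matrix.posSemidef_conjTranspose_mul_self X).1.eigenvectorUnitary :
      Matrix I I ℂ)).trace.re

end

/-!
If `v ∈ ℂ^m ⊗ ℂ^n` has Schmidt rank at most `k`, the column space of its coefficient matrix
has dimension at most `k`, so there is a partial isometry `W : ℂ^m → ℂ^k` whose initial space
contains it. Compressing by `W ⊗ 1`, i.e. `X ↦ (W ⊗ 1) X (W ⊗ 1)ᴴ` and `v ↦ (W ⊗ 1) v`, keeps `X`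
Hermitian and contractive and `v` a unit vector, and since `id ⊗ Φ` commutes with multiplication
by `W ⊗ 1` on either side, it preserves `⟨v, (id ⊗ Φ)(X) v⟩`. So every value on the right-hand
side is already attained with `m = k`.
-/

open scoped Matrix.Norms.L2Operator

section InnerProduct

variable {I J : Type*} [Fintype I] [Fintype J]

lemma inprod_eq_star_dotProduct (v w : I → ℂ) : inprod v w = star v ⬝ᵥ w := rfl

lemma inprod_eq_inner (v w : I → ℂ) :
    inprod v w = inner ℂ (WithLp.toLp 2 v) (WithLp.toLp 2 w) := by
  simp [EuclideanSpace.inner_toLp_toLp, inprod, dotProduct, mul_comm]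

lemma unitVec_iff_norm_eq_one (v : I → ℂ) : UnitVec v ↔ ‖WithLp.toLp 2 v‖ = 1 := by
  rw [UnitVec, inprod_eq_inner, inner_self_eq_norm_sq_to_K, ← RCLike.ofReal_pow,
    ← RCLike.ofReal_one, RCLike.ofReal_inj, pow_eq_one_iff_of_nonneg (norm_nonneg _) two_ne_zero]

lemma inprod_mulVec (A : Matrix I J ℂ) (v : I → ℂ) (w : J → ℂ) :
    inprod v (A *ᵥ w) = inprod (Aᴴ *ᵥ v) w := by
  rw [inprod_eq_star_dotProduct, inprod_eq_star_dotProduct, dotProduct_mulVec, star_mulVec,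
    conjTranspose_conjTranspose]

variable [DecidableEq J]

lemma norm_inprod_mulVec_le {A : Matrix I J ℂ} {v : I → ℂ} {w : J → ℂ}
    (hv : UnitVec v) (hw : UnitVec w) : ‖inprod v (A *ᵥ w)‖ ≤ ‖A‖ := by
  rw [unitVec_iff_norm_eq_one] at hv hw
  calc ‖inprod v (A *ᵥ w)‖ ≤ ‖WithLp.toLp 2 v‖ * ‖WithLp.toLp 2 (A *ᵥ w)‖ := by
        rw [inprod_eq_inner]; exact norm_inner_le_norm _ _
    _ ≤ 1 * (‖A‖ * ‖WithLp.toLp 2 w‖) := by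
        rw [hv]; gcongr; exact A.l2_opNorm_mulVec (WithLp.toLp 2 w)
    _ = ‖A‖ := by rw [hw]; ring

lemma opNorm_eq_l2_opNorm (A : Matrix I J ℂ) : opNorm A = ‖A‖ := by
  have hbdd : ∀ t ∈ { t : ℝ | ∃ v w, UnitVec v ∧ UnitVec w ∧ t = ‖inprod v (A *ᵥ w)‖ },
      t ≤ ‖A‖ := by
    rintro t ⟨v, w, hv, hw, rfl⟩
    exact norm_inprod_mulVec_le hv hw
  refine le_antisymm (Real.sSup_le hbdd (norm_nonneg _)) ?_
  have h0 : 0 ≤ opNorm A := Real.sSup_nonneg fun t ⟨_, _, _, _, ht⟩ => ht ▸ norm_nonneg _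
  rw [l2_opNorm_def]
  refine ContinuousLinearMap.opNorm_le_of_re_inner_le h0 fun x y hx hy => ?_
  calc RCLike.re (inner ℂ _ y) ≤ ‖inprod y.ofLp (A *ᵥ x.ofLp)‖ := by
        rw [inprod_eq_inner, norm_inner_symm]; exact RCLike.re_le_norm _
    _ ≤ opNorm A := le_csSup ⟨_, hbdd⟩ ⟨y.ofLp, x.ofLp, (unitVec_iff_norm_eq_one _).2 hy,
          (unitVec_iff_norm_eq_one _).2 hx, rfl⟩

end InnerProduct

section Kronecker

variable {R : Type*} [CommSemiring R] {I J K L : Type*} [DecidableEq J]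

lemma kronecker_one_mulVec_apply [Fintype I] [Fintype J] (A : Matrix K I R) (v : I × J → R)
    (i : K) (j : J) :
    (A ⊗ₖ (1 : Matrix J J R) *ᵥ v) (i, j) = (A * Matrix.of fun i j => v (i, j)) i j := by
  simp [mulVec, dotProduct, mul_apply, one_apply, Fintype.sum_prod_type]

lemma kronecker_one_mul_mul_kronecker_one_apply [Fintype I] [Fintype J] (A : Matrix K I R)
    (Y : Matrix (I × J) (I × J) R) (B : Matrix I L R) (p : K × J) (q : L × J) :
    (A ⊗ₖ (1 : Matrix J J R) * Y * B ⊗ₖ (1 : Matrix J J R)) p q =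
      ∑ i, ∑ i', A p.1 i * Y (i, p.2) (i', q.2) * B i' q.1 := by
  simp [mul_apply, one_apply, Fintype.sum_prod_type, Finset.sum_mul]
  rw [Finset.sum_comm]

variable [StarRing R]

lemma conjTranspose_kronecker_one (A : Matrix I K R) :
    (A ⊗ₖ (1 : Matrix J J R))ᴴ = Aᴴ ⊗ₖ (1 : Matrix J J R) := by
  rw [conjTranspose_kronecker, conjTranspose_one]

lemma conjTranspose_mul_self_kronecker_one [Fintype I] [Fintype J] (A : Matrix I K R) :
    (A ⊗ₖ (1 : Matrix J J R))ᴴ * A ⊗ₖ (1 : Matrix J J R) = (Aᴴ * A) ⊗ₖ (1 : Matrix J J R) := by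
  rw [conjTranspose_kronecker_one, ← mul_kronecker_mul, Matrix.one_mul]

end Kronecker

local notation:100 A:100 " ⊗ₖ𝟙 " n:max => A ⊗ₖ (1 : Matrix (Fin n) (Fin n) ℂ)

lemma tensorId_kronecker_one_mul_mul {I K : Type*} [Fintype I] [Fintype K] {a b : ℕ}
    (Φ : Matrix (Fin a) (Fin a) ℂ →ₗ[ℂ] Matrix (Fin b) (Fin b) ℂ) (A : Matrix K I ℂ)
    (X : Matrix (I × Fin a) (I × Fin a) ℂ) (B : Matrix I K ℂ) :
    tensorId Φ (A ⊗ₖ𝟙 a * X * B ⊗ₖ𝟙 a) = A ⊗ₖ𝟙 b * tensorId Φ X * B ⊗ₖ𝟙 b := by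
  ext p q
  have hblock : (Matrix.of fun s t => (A ⊗ₖ𝟙 a * X * B ⊗ₖ𝟙 a) (p.1, s) (q.1, t)) =
      ∑ i, ∑ i', (A p.1 i * B i' q.1) • Matrix.of fun s t => X (i, s) (i', t) := by
    ext s t
    simp only [of_apply, kronecker_one_mul_mul_kronecker_one_apply, Matrix.sum_apply,
      Matrix.smul_apply, smul_eq_mul]
    exact Finset.sum_congr rfl fun i _ => Finset.sum_congr rfl fun i' _ => by ring
  rw [kronecker_one_mul_mul_kronecker_one_apply, tensorId, of_apply, hblock]
  simp only [map_sum, map_smul, Matrix.sum_apply, Matrix.smul_apply, smul_eq_mul, tensorId,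
    of_apply]
  exact Finset.sum_congr rfl fun i _ => Finset.sum_congr rfl fun i' _ => by ring

section PartialIsometry

variable {I J K : Type*} [Fintype I] [Fintype J] [Fintype K] [DecidableEq J]

lemma exists_isometry_mul_conjTranspose_mul_eq (M : Matrix I J ℂ) :
    ∃ B : Matrix I (Fin M.rank) ℂ, Bᴴ * B = 1 ∧ B * Bᴴ * M = M := by
  let R := LinearMap.range (toEuclideanLin M)
  have hR : Module.finrank ℂ R = M.rank :=
    (M.rank_eq_finrank_range_toLin (EuclideanSpace.basisFun I ℂ).toBasis
      (EuclideanSpace.basisFun J ℂ).toBasis).symm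
  let b := (stdOrthonormalBasis ℂ R).reindex (finCongr hR)
  let B : Matrix I (Fin M.rank) ℂ := Matrix.of fun i j => (b j : EuclideanSpace ℂ I) i
  refine ⟨B, ?_, ?_⟩
  · ext j j'
    have hinner : (Bᴴ * B) j j' = inner ℂ (b j) (b j') := by
      simp [B, mul_apply, Submodule.coe_inner, PiLp.inner_apply, mul_comm]
    rw [hinner, orthonormal_iff_ite.mp b.orthonormal, one_apply]
  · rw [ext_iff_mulVec]
    intro v
    rw [← mulVec_mulVec, ← mulVec_mulVec]
    let x : R := ⟨WithLp.toLp 2 (M *ᵥ v), WithLp.toLp 2 v, rfl⟩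
    funext i
    have hx := congrArg (fun y : R => (y : EuclideanSpace ℂ I).ofLp i) (b.sum_repr' x)
    simpa [B, mulVec, dotProduct, Submodule.coe_inner, PiLp.inner_apply, x, mul_comm,
      Finset.mul_sum] using hx

lemma exists_partialIsometry_of_rank_le [DecidableEq K] (M : Matrix I J ℂ)
    (hM : M.rank ≤ Fintype.card K) :
    ∃ W : Matrix K I ℂ, IsIdempotentElem (Wᴴ * W) ∧ Wᴴ * W * M = M := by
  obtain ⟨B, hBB, hBM⟩ := exists_isometry_mul_conjTranspose_mul_eq M
  obtain ⟨e⟩ : Nonempty (Fin M.rank ↪ K) :=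
    Function.Embedding.nonempty_of_card_le (by simpa using hM)
  let E : Matrix K (Fin M.rank) ℂ := (1 : Matrix K K ℂ).submatrix id e
  have hEE : Eᴴ * E = 1 := by
    rw [conjTranspose_submatrix, conjTranspose_one,
      ← submatrix_mul _ _ _ _ _ Function.bijective_id, Matrix.one_mul, submatrix_one_embedding]
  have hW : (E * Bᴴ)ᴴ * (E * Bᴴ) = B * Bᴴ := by
    rw [conjTranspose_mul, conjTranspose_conjTranspose, Matrix.mul_assoc,
      ← Matrix.mul_assoc Eᴴ, hEE, Matrix.one_mul]
  refine ⟨E * Bᴴ, ?_, by rw [hW, hBM]⟩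
  rw [hW, IsIdempotentElem, Matrix.mul_assoc, ← Matrix.mul_assoc Bᴴ, hBB, Matrix.one_mul]

lemma l2_opNorm_le_one_of_isIdempotentElem {A : Matrix I J ℂ}
    (h : IsIdempotentElem (Aᴴ * A)) : ‖A‖ ≤ 1 := by
  set P := Aᴴ * A
  -- the C⋆-identity for the projection `P` reads `‖P‖ = ‖P‖ * ‖P‖`
  have hPP : Pᴴ * P = P := by rw [(isHermitian_conjTranspose_mul_self A).eq]; exact h
  have hP : ‖P‖ ≤ 1 := by
    have := l2_opNorm_conjTranspose_mul_self P
    rw [hPP] at this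
    nlinarith [norm_nonneg P]
  have := l2_opNorm_conjTranspose_mul_self A
  nlinarith [norm_nonneg A]

end PartialIsometry

section Compression

variable {I K : Type*} [Fintype I] [Fintype K] [DecidableEq I] [DecidableEq K] {r n : ℕ}
  (Φ : Matrix (Fin r) (Fin r) ℂ →ₗ[ℂ] Matrix (Fin n) (Fin n) ℂ)
  {X : Matrix (I × Fin r) (I × Fin r) ℂ} {v : I × Fin n → ℂ}

lemma exists_tensorId_inprod_eq_of_partialIsometry (W : Matrix K I ℂ)
    (hW : IsIdempotentElem (Wᴴ * W)) (hX : X.IsHermitian) (hXn : opNorm X ≤ 1)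
    (hv : UnitVec v) (hWv : (Wᴴ * W) ⊗ₖ𝟙 n *ᵥ v = v) :
    ∃ X' : Matrix (K × Fin r) (K × Fin r) ℂ, X'.IsHermitian ∧ opNorm X' ≤ 1 ∧
      ∃ w : K × Fin n → ℂ, UnitVec w ∧
        inprod w (tensorId Φ X' *ᵥ w) = inprod v (tensorId Φ X *ᵥ v) := by
  have hnorm : ‖W ⊗ₖ𝟙 r‖ ≤ 1 := by
    refine l2_opNorm_le_one_of_isIdempotentElem ?_
    rw [conjTranspose_mul_self_kronecker_one, IsIdempotentElem, ← mul_kronecker_mul, hW.eq,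
      Matrix.one_mul]
  have hWv' : (W ⊗ₖ𝟙 n)ᴴ *ᵥ (W ⊗ₖ𝟙 n *ᵥ v) = v := by
    rw [mulVec_mulVec, conjTranspose_mul_self_kronecker_one, hWv]
  refine ⟨W ⊗ₖ𝟙 r * X * Wᴴ ⊗ₖ𝟙 r, ?_, ?_, W ⊗ₖ𝟙 n *ᵥ v, ?_, ?_⟩
  · rw [← conjTranspose_kronecker_one]
    exact isHermitian_mul_mul_conjTranspose _ hX
  · rw [opNorm_eq_l2_opNorm] at hXn ⊢
    calc ‖W ⊗ₖ𝟙 r * X * Wᴴ ⊗ₖ𝟙 r‖ ≤ ‖W ⊗ₖ𝟙 r‖ * ‖X‖ * ‖Wᴴ ⊗ₖ𝟙 r‖ :=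
          (l2_opNorm_mul _ _).trans (by gcongr; exact l2_opNorm_mul _ _)
      _ ≤ 1 * 1 * 1 := by
          rw [← conjTranspose_kronecker_one, l2_opNorm_conjTranspose]
          gcongr
      _ = 1 := by ring
  · rw [UnitVec, inprod_mulVec, hWv']
    exact hv
  · rw [tensorId_kronecker_one_mul_mul, ← conjTranspose_kronecker_one, ← mulVec_mulVec,
      ← mulVec_mulVec, inprod_mulVec, hWv']

lemma exists_tensorId_inprod_eq_of_schmidtRank_le (hX : X.IsHermitian) (hXn : opNorm X ≤ 1)
    (hv : UnitVec v) (hSR : SchmidtRank v ≤ Fintype.card K) :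
    ∃ X' : Matrix (K × Fin r) (K × Fin r) ℂ, X'.IsHermitian ∧ opNorm X' ≤ 1 ∧
      ∃ w : K × Fin n → ℂ, UnitVec w ∧
        inprod w (tensorId Φ X' *ᵥ w) = inprod v (tensorId Φ X *ᵥ v) := by
  obtain ⟨W, hW, hWv⟩ := exists_partialIsometry_of_rank_le (K := K) _ hSR
  refine exists_tensorId_inprod_eq_of_partialIsometry Φ W hW hX hXn hv ?_
  funext ⟨i, j⟩
  rw [kronecker_one_mulVec_apply, hWv, of_apply]

end Compression

theorem cb_kSuperMinimal_order_norm_stabilizes_general (r n k : ℕ) (hk : 1 ≤ k)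
    (Φ : Matrix (Fin r) (Fin r) ℂ →ₗ[ℂ] Matrix (Fin n) (Fin n) ℂ) :
    sSup { t : ℝ | ∃ X : Matrix (Fin k × Fin r) (Fin k × Fin r) ℂ,
        X.IsHermitian ∧ opNorm X ≤ 1 ∧ ∃ v : Fin k × Fin n → ℂ, UnitVec v ∧
        t = ‖inprod v ((tensorId Φ X).mulVec v)‖ } =
      sSup { t : ℝ | ∃ (m : ℕ), 0 < m ∧ ∃ X : Matrix (Fin m × Fin r) (Fin m × Fin r) ℂ,
        X.IsHermitian ∧ opNorm X ≤ 1 ∧ ∃ v : Fin m × Fin n → ℂ, UnitVec v ∧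
        SchmidtRank v ≤ k ∧
        t = ‖inprod v ((tensorId Φ X).mulVec v)‖ } := by
  congr 1
  ext t
  constructor
  · rintro ⟨X, hX, hXn, v, hv, rfl⟩
    exact ⟨k, hk, X, hX, hXn, v, hv, (rank_le_card_height _).trans_eq (Fintype.card_fin k), rfl⟩
  · rintro ⟨m, -, X, hX, hXn, v, hv, hSR, rfl⟩
    obtain ⟨X', hX', hX'n, w, hw, hval⟩ := exists_tensorId_inprod_eq_of_schmidtRank_le
      (K := Fin k) Φ hX hXn hv (hSR.trans_eq (Fintype.card_fin k).symm)
    exact ⟨X', hX', hX'n, w, hw, by rw [hval]⟩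

/-- Equation (10): stabilization of the completely bounded order norm on the `k`-super
minimal operator system. -/
theorem cb_kSuperMinimal_order_norm_stabilizes (r n k : ℕ) (hr : 0 < r) (hk : 1 ≤ k)
    (hkn : k ≤ n)
    (Φ : Matrix (Fin r) (Fin r) ℂ →ₗ[ℂ] Matrix (Fin n) (Fin n) ℂ) :
    sSup { t : ℝ | ∃ X : Matrix (Fin k × Fin r) (Fin k × Fin r) ℂ,
        X.IsHermitian ∧ opNorm X ≤ 1 ∧ ∃ v : Fin k × Fin n → ℂ, UnitVec v ∧
        t = ‖inprod v ((tensorId Φ X).mulVec v)‖ } =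
      sSup { t : ℝ | ∃ (m : ℕ), 0 < m ∧ ∃ X : Matrix (Fin m × Fin r) (Fin m × Fin r) ℂ,
        X.IsHermitian ∧ opNorm X ≤ 1 ∧ ∃ v : Fin m × Fin n → ℂ, UnitVec v ∧
        SchmidtRank v ≤ k ∧
        t = ‖inprod v ((tensorId Φ X).mulVec v)‖ } :=
  cb_kSuperMinimal_order_norm_stabilizes_general r n k hk Φ
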